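/- Let α₀ > 0, δ₁, δ₂, ε > 0 be reals, and let χ_low, χ_high be reals with χ_low ≥ ln(α₀) - ln(1 + δ₁) and χ_high ≥ ln(α₀) - ln(1 - δ₂), where δ₂ < 1. Let q₂ ∈ [0,1] with q₂ ≥ δ₁(1+ε)/(δ₁+δ₂), and set q₁ = 1 - q₂. Then q₁·e^{-χ_low} + q₂·e^{-χ_high} ≤ (1 - ε·δ₁)/α₀. -/
import Mathlib

/-- Key inequality for mixing two mutation rates. -/
theorem stmt_4 (α₀ δ₁ δ₂ ε χlow χhigh q₂ : ℝ)
    (hα : 0 < α₀) (hδ₁ : 0 < δ₁) (hδ₂ : 0 < δ₂) (hδ₂1 : δ₂ < 1) (hε : 0 < ε)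
    (hlow : χlow ≥ Real.log α₀ - Real.log (1 + δ₁))
    (hhigh : χhigh ≥ Real.log α₀ - Real.log (1 - δ₂))
    (hq0 : 0 ≤ q₂) (hq1 : q₂ ≤ 1)
    (hq : q₂ ≥ δ₁ * (1 + ε) / (δ₁ + δ₂)) :
    (1 - q₂) * Real.exp (-χlow) + q₂ * Real.exp (-χhigh)
      ≤ (1 - ε * δ₁) / α₀ := by
  have h1 : (0:ℝ) < 1 + δ₁ := by linarith
  have h2 : (0:ℝ) < 1 - δ₂ := by linarith
  have elow : Real.exp (-χlow) ≤ (1 + δ₁) / α₀ := by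
    rw [show (1 + δ₁) / α₀ = Real.exp (Real.log (1 + δ₁) - Real.log α₀) by
      rw [Real.exp_sub, Real.exp_log h1, Real.exp_log hα]]
    exact Real.exp_le_exp.mpr (by linarith)
  have ehigh : Real.exp (-χhigh) ≤ (1 - δ₂) / α₀ := by
    rw [show (1 - δ₂) / α₀ = Real.exp (Real.log (1 - δ₂) - Real.log α₀) by
      rw [Real.exp_sub, Real.exp_log h2, Real.exp_log hα]]
    exact Real.exp_le_exp.mpr (by linarith)
  have hq' : δ₁ * (1 + ε) ≤ q₂ * (δ₁ + δ₂) := by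
    rw [ge_iff_le, div_le_iff₀ (by linarith)] at hq
    linarith
  have step : (1 - q₂) * Real.exp (-χlow) + q₂ * Real.exp (-χhigh)
      ≤ (1 - q₂) * ((1 + δ₁) / α₀) + q₂ * ((1 - δ₂) / α₀) := by
    gcongr <;> linarith
  refine step.trans ?_
  have : (1 - q₂) * ((1 + δ₁) / α₀) + q₂ * ((1 - δ₂) / α₀)
      = ((1 - q₂) * (1 + δ₁) + q₂ * (1 - δ₂)) / α₀ := by ring
  rw [this]
  gcongr
  nlinarith
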